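/- arXiv:1004.0360 — 2 statements merged into one kernel-verified Lean document; each statement's English description precedes it below -/
import Mathlib

section
/- For every prime p and every s ∈ ℂ^n with Re(s_i) > 2 for i = 1,…,n, the series Σ_{ν ∈ ℕ^n} φ(p^{ν_1+⋯+ν_n})·p^{−(ν_1 s_1 + ⋯ + ν_n s_n)} converges absolutely and equals (∏_{i=1}^n (1 − p^{1−s_i})^{−1}) · (1 − 1/p + (1/p)·∏_{i=1}^n (1 − p^{1−s_i})). -/
/-!
Put `x i = p ^ (1 - s i)`, so `‖x i‖ < 1`. Since `φ (p ^ k) = (1 - 1/p) p ^ k` for `k ≥ 1` and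
`φ 1 = 1`, the term indexed by `ν` equals `(1 - 1/p) ∏ i, x i ^ ν i` plus a correction `1/p` at
`ν = 0`. The first part sums to `(1 - 1/p) ∏ i, (1 - x i)⁻¹` as a product of absolutely convergent
geometric series.
-/

open Complex

section ProdPi

variable {R : Type*} [NormedCommRing R]

theorem summable_norm_prod_pi {n : ℕ} {β : Fin n → Type*} {f : (i : Fin n) → β i → R}
    (hf : ∀ i, Summable fun b => ‖f i b‖) :
    Summable fun ν : ((i : Fin n) → β i) => ‖∏ i, f i (ν i)‖ := by
  induction n with
  | zero => exact Summable.of_finite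
  | succ n ih =>
    rw [← (Fin.consEquiv β).summable_iff]
    exact ((hf 0).mul_norm (ih fun i => hf i.succ)).congr fun x => by simp [Fin.prod_univ_succ]

theorem hasSum_prod_pi {n : ℕ} {β : Fin n → Type*} {f : (i : Fin n) → β i → R}
    {T : Fin n → R} (hf : ∀ i, Summable fun b => ‖f i b‖) (hT : ∀ i, HasSum (f i) (T i)) :
    HasSum (fun ν : ((i : Fin n) → β i) => ∏ i, f i (ν i)) (∏ i, T i) := by
  induction n with
  | zero =>
    simp only [Finset.univ_eq_empty, Finset.prod_empty]
    exact hasSum_single default fun ν hν => (hν (Subsingleton.elim _ _)).elim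
  | succ n ih =>
    have htail : HasSum (fun μ : (i : Fin n) → β i.succ => ∏ i, f i.succ (μ i))
        (∏ i : Fin n, T i.succ) := ih (fun i => hf i.succ) (fun i => hT i.succ)
    have htail_norm : Summable fun μ : (i : Fin n) → β i.succ => ‖∏ i, f i.succ (μ i)‖ :=
      summable_norm_prod_pi fun i => hf i.succ
    have hprod_summable := summable_mul_of_summable_norm' (hf 0) (hT 0).summable htail_norm htail.summable
    have hmul := (hT 0).mul htail hprod_summable
    rw [← (Fin.consEquiv β).hasSum_iff, Fin.prod_univ_succ]
    exact hmul.congr_fun fun x => by simp [Fin.prod_univ_succ]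

end ProdPi

theorem Complex.cpow_sum {ι : Type*} {x : ℂ} (hx : x ≠ 0) (t : Finset ι) (z : ι → ℂ) :
    x ^ (∑ i ∈ t, z i) = ∏ i ∈ t, x ^ z i := by
  simp only [cpow_def_of_ne_zero hx, Finset.mul_sum, exp_sum]

theorem Complex.norm_natCast_cpow_lt_one {p : ℕ} (hp : 1 < p) {z : ℂ} (hz : z.re < 0) :
    ‖(p : ℂ) ^ z‖ < 1 := by
  rw [norm_natCast_cpow_of_pos (by omega)]
  exact Real.rpow_lt_one_of_one_lt_of_neg (by exact_mod_cast hp) hz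

theorem Nat.cast_totient_prime_pow {K : Type*} [Field K] [CharZero K] {p : ℕ} (hp : p.Prime)
    (k : ℕ) :
    (Nat.totient (p ^ k) : K) = (1 - 1 / p) * p ^ k + if k = 0 then (1 / p : K) else 0 := by
  have hp0 : (p : K) ≠ 0 := by exact_mod_cast hp.ne_zero
  cases k with
  | zero => simp
  | succ k =>
    rw [Nat.totient_prime_pow_succ hp, if_neg k.succ_ne_zero, add_zero]
    push_cast [Nat.cast_sub hp.one_le]
    field_simp
    ring

theorem natCast_pow_sum_mul_cpow_neg_sum {ι : Type*} [Fintype ι] {p : ℕ} (hp : p ≠ 0)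
    (ν : ι → ℕ) (s : ι → ℂ) :
    (p : ℂ) ^ (∑ i, ν i) * (p : ℂ) ^ (-∑ i, (ν i : ℂ) * s i) =
      ∏ i, ((p : ℂ) ^ (1 - s i)) ^ ν i := by
  have hp' : (p : ℂ) ≠ 0 := by exact_mod_cast hp
  simp_rw [← cpow_nat_mul, ← cpow_sum hp', ← cpow_natCast, ← cpow_add _ _ hp']
  congr 1
  push_cast
  simp only [mul_sub, mul_one, Finset.sum_sub_distrib]
  ring

theorem totient_prime_pow_sum_mul_cpow {ι : Type*} [Fintype ι] {p : ℕ} (hp : p.Prime)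
    (ν : ι → ℕ) (s : ι → ℂ) :
    (Nat.totient (p ^ ∑ i, ν i) : ℂ) * (p : ℂ) ^ (-∑ i, (ν i : ℂ) * s i) =
      (1 - 1 / p) * ∏ i, ((p : ℂ) ^ (1 - s i)) ^ ν i + if ν = 0 then (1 / p : ℂ) else 0 := by
  have hsum_eq_zero : ∑ i, ν i = 0 ↔ ν = 0 := by
    simp [Finset.sum_eq_zero_iff, funext_iff]
  rw [Nat.cast_totient_prime_pow hp, add_mul, mul_assoc,
    natCast_pow_sum_mul_cpow_neg_sum hp.ne_zero]
  simp_rw [hsum_eq_zero]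
  split_ifs with hν
  · simp [hν]
  · rw [zero_mul]

theorem statement13_general (n : ℕ) (p : ℕ) (hp : p.Prime)
    (s : Fin n → ℂ) (hs : ∀ i, 2 < (s i).re) :
    Summable (fun ν : Fin n → ℕ =>
      ‖(Nat.totient (p ^ (∑ i, ν i)) : ℂ) * (p : ℂ) ^ (-(∑ i, (ν i : ℂ) * s i))‖) ∧
    HasSum (fun ν : Fin n → ℕ =>
        (Nat.totient (p ^ (∑ i, ν i)) : ℂ) * (p : ℂ) ^ (-(∑ i, (ν i : ℂ) * s i)))
      ((∏ i, (1 - (p : ℂ) ^ ((1 : ℂ) - s i))⁻¹) *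
        (1 - 1 / (p : ℂ) + (1 / (p : ℂ)) * ∏ i, (1 - (p : ℂ) ^ ((1 : ℂ) - s i)))) := by
  set x : Fin n → ℂ := fun i => (p : ℂ) ^ ((1 : ℂ) - s i)
  have hx : ∀ i, ‖x i‖ < 1 := fun i =>
    norm_natCast_cpow_lt_one hp.one_lt (by simp only [sub_re, one_re]; linarith [hs i])
  have hgeom : HasSum (fun ν : Fin n → ℕ => ∏ i, x i ^ ν i) (∏ i, (1 - x i)⁻¹) :=
    hasSum_prod_pi (fun i => summable_norm_geometric_of_norm_lt_one (hx i))
      fun i => hasSum_geometric_of_norm_lt_one (hx i)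
  have hsum : HasSum (fun ν : Fin n → ℕ =>
      (Nat.totient (p ^ (∑ i, ν i)) : ℂ) * (p : ℂ) ^ (-(∑ i, (ν i : ℂ) * s i)))
      ((1 - 1 / p) * ∏ i, (1 - x i)⁻¹ + 1 / p) := by
    simp_rw [totient_prime_pow_sum_mul_cpow hp]
    exact (hgeom.mul_left _).add (hasSum_ite_eq 0 _)
  have hprod_ne : ∏ i, (1 - x i) ≠ 0 := Finset.prod_ne_zero_iff.mpr fun i _ =>
    sub_ne_zero.mpr fun h => (hx i).ne (by rw [← h, norm_one])
  refine ⟨summable_norm_iff.mpr hsum.summable, ?_⟩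
  convert hsum using 1
  change (∏ i, (1 - x i)⁻¹) * (1 - 1 / (p : ℂ) + 1 / p * ∏ i, (1 - x i)) = _
  rw [Finset.prod_inv_distrib]
  field_simp

theorem statement13 (n : ℕ) (hn : 1 ≤ n) (p : ℕ) (hp : p.Prime)
    (s : Fin n → ℂ) (hs : ∀ i, 2 < (s i).re) :
    Summable (fun ν : Fin n → ℕ =>
      ‖(Nat.totient (p ^ (∑ i, ν i)) : ℂ) * (p : ℂ) ^ (-(∑ i, (ν i : ℂ) * s i))‖) ∧
    HasSum (fun ν : Fin n → ℕ =>
        (Nat.totient (p ^ (∑ i, ν i)) : ℂ) * (p : ℂ) ^ (-(∑ i, (ν i : ℂ) * s i)))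
      ((∏ i, (1 - (p : ℂ) ^ ((1 : ℂ) - s i))⁻¹) *
        (1 - 1 / (p : ℂ) + (1 / (p : ℂ)) * ∏ i, (1 - (p : ℂ) ^ ((1 : ℂ) - s i)))) :=
  statement13_general n p hp s hs
end

section
/- Let N ≥ 1, let a ∈ ℂ∖{0}, let α ∈ ℕ^N ∖ {0}, set P = a·X_1^{α_1}⋯X_N^{α_N} − 1 ∈ ℂ[X_1,…,X_N], and let g ∈ ℂ[X_1,…,X_N]. If g(x) = 0 for every x ∈ (ℂ∖{0})^N with a·x_1^{α_1}⋯x_N^{α_N} = 1, then P divides g in ℂ[X_1,…,X_N]. -/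
/-!
By the Nullstellensatz a squarefree polynomial divides every polynomial vanishing on its zero
locus. Here `P = a X^α - 1` is squarefree because Euler's identity `Xᵢ ∂ᵢP = αᵢ (P + 1)` shows
that a common factor of `P` and `∂ᵢP` divides the unit `αᵢ`. The hypothesis only controls `g` on
the torus, but `g X₁⋯X_N` vanishes on all of `V(P)`; so `P ∣ g X₁⋯X_N`, and `P` is coprime to each
prime `Xᵢ` since `P(0) = -1`.
-/

open MvPolynomial

namespace MvPolynomial

variable {σ k : Type*} [Field k]

theorem dvd_of_isRadical_of_eval_eq_zero [IsAlgClosed k] [Finite σ]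
    {p f : MvPolynomial σ k} (hp : IsRadical p) (hf : ∀ x, eval x p = 0 → eval x f = 0) :
    p ∣ f := by
  have hmem : f ∈ vanishingIdeal k (zeroLocus k (Ideal.span {p})) := by
    rw [mem_vanishingIdeal_iff]
    exact fun x hx => hf x (hx p (Ideal.subset_span rfl))
  rw [vanishingIdeal_zeroLocus_eq_radical, (isRadical_iff_span_singleton.mp hp).radical] at hmem
  exact Ideal.mem_span_singleton.mp hmem

theorem squarefree_monomial_sub_one [CharZero k] {s : σ →₀ ℕ} (hs : s ≠ 0) (a : k) :
    Squarefree (monomial s a - 1) := by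
  obtain ⟨i, hi⟩ : ∃ i, s i ≠ 0 := by simpa [Finsupp.ext_iff] using hs
  have euler : X i * pderiv i (monomial s a - 1) =
      C (s i : k) * (monomial s a - 1) + C (s i : k) := by
    rw [map_sub, pderiv_one, sub_zero, X_mul_pderiv_monomial, nsmul_eq_mul, ← map_natCast C]
    ring
  rintro z ⟨r, hr⟩
  have hz : z ∣ monomial s a - 1 := ⟨z * r, by rw [hr, mul_assoc]⟩
  have hz' : z ∣ pderiv i (monomial s a - 1) :=
    ⟨pderiv i z * r + pderiv i z * r + z * pderiv i r, by rw [hr, pderiv_mul, pderiv_mul]; ring⟩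
  have hzC : z ∣ C (s i : k) :=
    (dvd_add_right (hz.mul_left _)).mp (euler ▸ hz'.mul_left (X i))
  exact isUnit_of_dvd_unit hzC ((isUnit_iff_ne_zero.mpr (Nat.cast_ne_zero.mpr hi)).map C)

theorem isRelPrime_X_of_constantCoeff_ne_zero {p : MvPolynomial σ k}
    (hp : constantCoeff p ≠ 0) (i : σ) : IsRelPrime p (X i) :=
  (X_prime.irreducible.isRelPrime_iff_not_dvd.mpr fun ⟨q, hq⟩ => hp (by simp [hq])).symm

end MvPolynomial

theorem statement17_general (N : ℕ) (a : ℂ)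
    (α : Fin N → ℕ) (hα : α ≠ 0) (g : MvPolynomial (Fin N) ℂ)
    (hg : ∀ x : Fin N → ℂ, (∀ i, x i ≠ 0) → a * ∏ i, x i ^ α i = 1 →
      MvPolynomial.eval x g = 0) :
    (MvPolynomial.C a * ∏ i, MvPolynomial.X i ^ α i - 1) ∣ g := by
  have hvanish : ∀ x, eval x (C a * ∏ i, X i ^ α i - 1) = 0 → eval x (g * ∏ i, X i) = 0 := by
    intro x hx
    rw [map_sub, map_one, sub_eq_zero] at hx
    simp only [map_mul, map_prod, map_pow, eval_C, eval_X] at hx ⊢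
    by_cases hx0 : ∀ i, x i ≠ 0
    · rw [hg x hx0 hx, zero_mul]
    · obtain ⟨i, hi⟩ := not_forall_not.mp hx0
      rw [Finset.prod_eq_zero (Finset.mem_univ i) hi, mul_zero]
  set s : Fin N →₀ ℕ := Finsupp.equivFunOnFinite.symm α
  have hP : C a * ∏ i, X i ^ α i - 1 = (monomial s a - 1 : MvPolynomial (Fin N) ℂ) := by
    rw [monomial_eq, Finsupp.prod_fintype _ _ (fun _ => pow_zero _)]
    rfl
  have hs : s ≠ 0 := fun h => hα (funext fun i => DFunLike.congr_fun h i)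
  rw [hP] at hvanish ⊢
  have hdvd : monomial s a - 1 ∣ g * ∏ i, X i :=
    dvd_of_isRadical_of_eval_eq_zero (squarefree_monomial_sub_one hs a).isRadical hvanish
  have hcoprime : IsRelPrime (monomial s a - 1) (∏ i, X i : MvPolynomial (Fin N) ℂ) :=
    IsRelPrime.prod_right fun i _ =>
      isRelPrime_X_of_constantCoeff_ne_zero (by simp [constantCoeff_monomial, hs]) i
  exact hcoprime.dvd_of_dvd_mul_right hdvd

theorem statement17 (N : ℕ) (hN : 1 ≤ N) (a : ℂ) (ha : a ≠ 0)
    (α : Fin N → ℕ) (hα : α ≠ 0) (g : MvPolynomial (Fin N) ℂ)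
    (hg : ∀ x : Fin N → ℂ, (∀ i, x i ≠ 0) → a * ∏ i, x i ^ α i = 1 →
      MvPolynomial.eval x g = 0) :
    (MvPolynomial.C a * ∏ i, MvPolynomial.X i ^ α i - 1) ∣ g :=
  statement17_general N a α hα g hg
end
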